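/- arXiv:math/0504598 — 5 statements merged into one kernel-verified Lean document; each statement's English description precedes it below -/
import Mathlib

section
/- Let $\Omega \subset \mathbb{R}^n$ be a bounded open set, $c_1 > 0$, and $w \in C^2(\Omega)$ with $w \ge c_1$ in $\Omega$. Set $\varphi(y) = e^{\delta|y|^2}$. Then there exist $\delta > 0$, depending only on $R := \sup\{|y| : y \in \Omega\}$, and $\bar\epsilon > 0$, depending only on $\delta$, $c_1$ and $R$, such that for all $0 < \epsilon < \bar\epsilon$, the matrix inequality $A_{w+\epsilon\varphi} \ge (1 + \epsilon\tfrac{\varphi}{w}) A_w + \tfrac{\epsilon\delta}{2}\varphi w I$ holds pointwise in $\Omega$ (in the sense of symmetric matrices). -/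
open Filter MeasureTheory

noncomputable def grad {n : ℕ} (w : EuclideanSpace ℝ (Fin n) → ℝ)
    (x : EuclideanSpace ℝ (Fin n)) : Fin n → ℝ :=
  fun i => fderiv ℝ w x (EuclideanSpace.single i 1)

noncomputable def hess {n : ℕ} (w : EuclideanSpace ℝ (Fin n) → ℝ)
    (x : EuclideanSpace ℝ (Fin n)) : Matrix (Fin n) (Fin n) ℝ :=
  Matrix.of fun i j =>
    fderiv ℝ (fun y => fderiv ℝ w y (EuclideanSpace.single i 1)) x (EuclideanSpace.single j 1)

noncomputable def gradSq {n : ℕ} (w : EuclideanSpace ℝ (Fin n) → ℝ)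
    (x : EuclideanSpace ℝ (Fin n)) : ℝ :=
  ∑ i, (grad w x i) ^ 2

noncomputable def Aw {n : ℕ} (w : EuclideanSpace ℝ (Fin n) → ℝ)
    (x : EuclideanSpace ℝ (Fin n)) : Matrix (Fin n) (Fin n) ℝ :=
  w x • hess w x - ((1 / 2) * gradSq w x) • (1 : Matrix (Fin n) (Fin n) ℝ)

noncomputable def Asch (n : ℕ) (u : EuclideanSpace ℝ (Fin n) → ℝ)
    (x : EuclideanSpace ℝ (Fin n)) : Matrix (Fin n) (Fin n) ℝ :=
  (-(2 / ((n : ℝ) - 2)) * (u x) ^ (-(((n : ℝ) + 2) / ((n : ℝ) - 2)))) • hess u x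
    + ((2 * (n : ℝ) / ((n : ℝ) - 2) ^ 2) * (u x) ^ (-(2 * (n : ℝ) / ((n : ℝ) - 2)))) •
        Matrix.of (fun i j => grad u x i * grad u x j)
    - ((2 / ((n : ℝ) - 2) ^ 2) * (u x) ^ (-(2 * (n : ℝ) / ((n : ℝ) - 2))) * gradSq u x) •
        (1 : Matrix (Fin n) (Fin n) ℝ)

noncomputable def kelvin {n : ℕ} (u : EuclideanSpace ℝ (Fin n) → ℝ)
    (x : EuclideanSpace ℝ (Fin n)) (l : ℝ) (y : EuclideanSpace ℝ (Fin n)) : ℝ :=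
  (l ^ (n - 2) / ‖y - x‖ ^ (n - 2)) * u (x + (l ^ 2 / ‖y - x‖ ^ 2) • (y - x))

/-! The weight `φ = exp (δ |y|²)` has `∇φ = 2δφ y` and `∇²φ = 2δφ I + 4δ²φ y yᵀ`. Expanding
`A_{w+εφ}` with these, the difference of the two sides of the inequality is exactly
`4εδ²φ (w + εφ) y yᵀ + c I` with
`c = εφ/(2w) |∇w - 2δw y|² + εφδw (3/2 - 2δ|y|²) + 2ε²δφ² (1 - δ|y|²)`,
obtained by completing the square in `∇w`. Both coefficients are nonnegative as soon as
`δ R² ≤ 3/4`, for every `ε > 0`. -/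

open Matrix

section Calculus

variable {n : ℕ}

theorem grad_add {f g : EuclideanSpace ℝ (Fin n) → ℝ} {x : EuclideanSpace ℝ (Fin n)}
    (hf : DifferentiableAt ℝ f x) (hg : DifferentiableAt ℝ g x) :
    grad (fun y => f y + g y) x = grad f x + grad g x := by
  ext i
  simp [grad, fderiv_fun_add hf hg]

theorem hess_add {f g : EuclideanSpace ℝ (Fin n) → ℝ} {x : EuclideanSpace ℝ (Fin n)}
    (hf : ContDiffAt ℝ 2 f x) (hg : ContDiffAt ℝ 2 g x) :
    hess (fun y => f y + g y) x = hess f x + hess g x := by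
  ext i j
  have hpartial {h : EuclideanSpace ℝ (Fin n) → ℝ} (hh : ContDiffAt ℝ 2 h x) :
      DifferentiableAt ℝ (fun y => fderiv ℝ h y (EuclideanSpace.single i 1)) x :=
    ((hh.fderiv_right (m := 1) le_rfl).differentiableAt one_ne_zero).clm_apply
      (differentiableAt_const _)
  have hsum : (fun y => fderiv ℝ (fun y => f y + g y) y (EuclideanSpace.single i 1))
      =ᶠ[nhds x] fun y => fderiv ℝ f y (EuclideanSpace.single i 1)
        + fderiv ℝ g y (EuclideanSpace.single i 1) := by
    filter_upwards [hf.eventually (by simp), hg.eventually (by simp)] with y hfy hgy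
    simp [fderiv_fun_add (hfy.differentiableAt two_ne_zero) (hgy.differentiableAt two_ne_zero)]
  simp [hess, hsum.fderiv_eq, fderiv_fun_add (hpartial hf) (hpartial hg)]

theorem hasFDerivAt_gaussian (c δ : ℝ) (x : EuclideanSpace ℝ (Fin n)) :
    HasFDerivAt (fun y : EuclideanSpace ℝ (Fin n) => c * Real.exp (δ * ‖y‖ ^ 2))
      ((2 * c * δ * Real.exp (δ * ‖x‖ ^ 2)) • innerSL ℝ x) x := by
  refine ((((hasStrictFDerivAt_norm_sq x).hasFDerivAt).const_mul δ).exp.const_mul c).congr_fderiv ?_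
  ext v
  simp [two_smul]
  ring

theorem fderiv_gaussian_single (c δ : ℝ) (x : EuclideanSpace ℝ (Fin n)) (i : Fin n) :
    fderiv ℝ (fun y : EuclideanSpace ℝ (Fin n) => c * Real.exp (δ * ‖y‖ ^ 2)) x
        (EuclideanSpace.single i 1) = 2 * c * δ * Real.exp (δ * ‖x‖ ^ 2) * x i := by
  simp [(hasFDerivAt_gaussian c δ x).fderiv, EuclideanSpace.inner_single_right]

theorem grad_gaussian (c δ : ℝ) (x : EuclideanSpace ℝ (Fin n)) :
    grad (fun y => c * Real.exp (δ * ‖y‖ ^ 2)) x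
      = (2 * c * δ * Real.exp (δ * ‖x‖ ^ 2)) • WithLp.ofLp x := by
  ext i
  simp [grad, fderiv_gaussian_single]

theorem hess_gaussian (c δ : ℝ) (x : EuclideanSpace ℝ (Fin n)) :
    hess (fun y => c * Real.exp (δ * ‖y‖ ^ 2)) x
      = (2 * c * δ * Real.exp (δ * ‖x‖ ^ 2)) • 1
        + (4 * c * δ ^ 2 * Real.exp (δ * ‖x‖ ^ 2)) • vecMulVec (WithLp.ofLp x) (WithLp.ofLp x) := by
  ext i j
  have hderiv : HasFDerivAt (fun y : EuclideanSpace ℝ (Fin n) =>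
      2 * c * δ * Real.exp (δ * ‖y‖ ^ 2) * y i)
      ((2 * c * δ * Real.exp (δ * ‖x‖ ^ 2)) • EuclideanSpace.proj i
        + x i • (2 * (2 * c * δ) * δ * Real.exp (δ * ‖x‖ ^ 2)) • innerSL ℝ x) x :=
    (hasFDerivAt_gaussian (2 * c * δ) δ x).mul
      (EuclideanSpace.proj (𝕜 := ℝ) i : EuclideanSpace ℝ (Fin n) →L[ℝ] ℝ).hasFDerivAt
  simp only [hess, fderiv_gaussian_single, Matrix.of_apply, hderiv.fderiv]
  simp [EuclideanSpace.inner_single_right, vecMulVec_apply, one_apply]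
  ring

theorem contDiff_gaussian (c δ : ℝ) :
    ContDiff ℝ 2 (fun y : EuclideanSpace ℝ (Fin n) => c * Real.exp (δ * ‖y‖ ^ 2)) :=
  contDiff_const.mul ((contDiff_const.mul (contDiff_norm_sq ℝ)).exp)

end Calculus

section Algebra

variable {n : ℕ}

/-- The matrix `A_w` at a point, as a function of the 2-jet `(w, ∇w, ∇²w)` there. -/
noncomputable def jetA (W : ℝ) (g : Fin n → ℝ) (H : Matrix (Fin n) (Fin n) ℝ) : Matrix (Fin n) (Fin n) ℝ :=
  W • H - (1 / 2 * (g ⬝ᵥ g)) • 1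

variable (H : Matrix (Fin n) (Fin n) ℝ) (g y : Fin n → ℝ) {W p ε δ : ℝ}

theorem jetA_perturb_sub_eq (hW : W ≠ 0) :
    jetA (W + ε * p) (g + (2 * ε * δ * p) • y)
        (H + ((2 * ε * δ * p) • 1 + (4 * ε * δ ^ 2 * p) • vecMulVec y y))
        - ((1 + ε * (p / W)) • jetA W g H + (ε * δ / 2 * p * W) • 1)
      = (4 * ε * δ ^ 2 * p * (W + ε * p)) • vecMulVec y y
        + (ε * p / (2 * W) * ((g - (2 * δ * W) • y) ⬝ᵥ (g - (2 * δ * W) • y))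
            + ε * p * δ * W * (3 / 2 - 2 * δ * (y ⬝ᵥ y))
            + 2 * ε ^ 2 * δ * p ^ 2 * (1 - δ * (y ⬝ᵥ y))) • 1 := by
  simp only [jetA, add_dotProduct, dotProduct_add, sub_dotProduct, dotProduct_sub,
    smul_dotProduct, dotProduct_smul, dotProduct_comm y g, smul_eq_mul]
  ext i j
  simp only [Matrix.sub_apply, Matrix.add_apply, Matrix.smul_apply, one_apply, vecMulVec_apply,
    smul_eq_mul]
  split_ifs <;> field_simp <;> ring

theorem jetA_perturb_sub_posSemidef (hW : 0 < W) (hp : 0 ≤ p) (hε : 0 ≤ ε) (hδ : 0 ≤ δ)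
    (hy : δ * (y ⬝ᵥ y) ≤ 3 / 4) :
    (jetA (W + ε * p) (g + (2 * ε * δ * p) • y)
        (H + ((2 * ε * δ * p) • 1 + (4 * ε * δ ^ 2 * p) • vecMulVec y y))
        - ((1 + ε * (p / W)) • jetA W g H + (ε * δ / 2 * p * W) • 1)).PosSemidef := by
  rw [jetA_perturb_sub_eq H g y hW.ne']
  have hsq : 0 ≤ (g - (2 * δ * W) • y) ⬝ᵥ (g - (2 * δ * W) • y) := by
    simpa using dotProduct_self_star_nonneg (g - (2 * δ * W) • y)
  have hy₁ : 0 ≤ 3 / 2 - 2 * δ * (y ⬝ᵥ y) := by linarith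
  have hy₂ : 0 ≤ 1 - δ * (y ⬝ᵥ y) := by linarith
  have hyy : (vecMulVec y y).PosSemidef := by simpa using posSemidef_vecMulVec_self_star y
  exact (hyy.smul (by positivity)).add (PosSemidef.one.smul (by positivity))

end Algebra

theorem Aw_eq_jetA {n : ℕ} (f : EuclideanSpace ℝ (Fin n) → ℝ) (x : EuclideanSpace ℝ (Fin n)) :
    Aw f x = jetA (f x) (grad f x) (hess f x) := by
  simp only [Aw, jetA, gradSq, dotProduct, sq]

theorem ofLp_dotProduct_ofLp_self {n : ℕ} (x : EuclideanSpace ℝ (Fin n)) :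
    WithLp.ofLp x ⬝ᵥ WithLp.ofLp x = ‖x‖ ^ 2 := by
  simp [dotProduct, EuclideanSpace.real_norm_sq_eq, ← sq]

theorem stmt1_general {n : ℕ} (Ω : Set (EuclideanSpace ℝ (Fin n)))
    (hΩ : IsOpen Ω) (hΩb : Bornology.IsBounded Ω)
    (c₁ : ℝ) (hc₁ : 0 < c₁) (w : EuclideanSpace ℝ (Fin n) → ℝ)
    (hw : ContDiffOn ℝ 2 w Ω) (hwc : ∀ x ∈ Ω, c₁ ≤ w x) :
    ∃ δ > (0 : ℝ), ∃ ε' > (0 : ℝ), ∀ ε : ℝ, 0 < ε → ε < ε' → ∀ x ∈ Ω,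
      (Aw (fun y => w y + ε * Real.exp (δ * ‖y‖ ^ 2)) x
        - ((1 + ε * (Real.exp (δ * ‖x‖ ^ 2) / w x)) • Aw w x
            + (ε * δ / 2 * Real.exp (δ * ‖x‖ ^ 2) * w x) •
                (1 : Matrix (Fin n) (Fin n) ℝ))).PosSemidef := by
  obtain ⟨R, hR⟩ := hΩb.exists_norm_le
  obtain ⟨δ, hδ, hδR⟩ : ∃ δ > (0 : ℝ), δ * (1 + R ^ 2) = 3 / 4 :=
    ⟨3 / (4 * (1 + R ^ 2)), by positivity, by field_simp⟩
  refine ⟨δ, hδ, 1, one_pos, fun ε hε _ x hx => ?_⟩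
  have hwx : ContDiffAt ℝ 2 w x := hw.contDiffAt (hΩ.mem_nhds hx)
  have hφx := (contDiff_gaussian ε δ).contDiffAt (x := x)
  have hxR : δ * (WithLp.ofLp x ⬝ᵥ WithLp.ofLp x) ≤ 3 / 4 := by
    rw [ofLp_dotProduct_ofLp_self, ← hδR]
    gcongr
    nlinarith [hR x hx, norm_nonneg x]
  rw [Aw_eq_jetA, Aw_eq_jetA, grad_add (hwx.differentiableAt two_ne_zero)
    (hφx.differentiableAt two_ne_zero), hess_add hwx hφx, grad_gaussian, hess_gaussian]
  exact jetA_perturb_sub_posSemidef _ _ _ (hc₁.trans_le (hwc x hx)) (Real.exp_pos _).le hε.le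
    hδ.le hxR

theorem stmt1 {n : ℕ} (hn : 3 ≤ n) (Ω : Set (EuclideanSpace ℝ (Fin n)))
    (hΩ : IsOpen Ω) (hΩb : Bornology.IsBounded Ω)
    (c₁ : ℝ) (hc₁ : 0 < c₁) (w : EuclideanSpace ℝ (Fin n) → ℝ)
    (hw : ContDiffOn ℝ 2 w Ω) (hwc : ∀ x ∈ Ω, c₁ ≤ w x) :
    ∃ δ > (0 : ℝ), ∃ ε' > (0 : ℝ), ∀ ε : ℝ, 0 < ε → ε < ε' → ∀ x ∈ Ω,
      (Aw (fun y => w y + ε * Real.exp (δ * ‖y‖ ^ 2)) x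
        - ((1 + ε * (Real.exp (δ * ‖x‖ ^ 2) / w x)) • Aw w x
            + (ε * δ / 2 * Real.exp (δ * ‖x‖ ^ 2) * w x) •
                (1 : Matrix (Fin n) (Fin n) ℝ))).PosSemidef :=
  stmt1_general Ω hΩ hΩb c₁ hc₁ w hw hwc
end

section
/- For $1 \le k \le n$, let $\Gamma_k$ be the connected component of $\{\lambda \in \mathbb{R}^n : \sigma_k(\lambda) > 0\}$ containing the positive cone $\Gamma_n = \{\lambda : \lambda_i > 0 \text{ for all } i\}$, where $\sigma_k(\lambda) = \sum_{1 \le i_1 < \cdots < i_k \le n} \lambda_{i_1}\cdots\lambda_{i_k}$ is the $k$-th elementary symmetric function. Then $\Gamma_k$ is an open convex symmetric cone with vertex at the origin, and $\Gamma_n \subset \Gamma_k \subset \Gamma_1 = \{\lambda : \sum_i \lambda_i > 0\}$. -/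
noncomputable def esym (n k : ℕ) (l : Fin n → ℝ) : ℝ :=
  ∑ s ∈ Finset.univ.powersetCard k, ∏ i ∈ s, l i

noncomputable def GammaK (n k : ℕ) : Set (Fin n → ℝ) :=
  connectedComponentIn {l | 0 < esym n k l} (fun _ => 1)

/-!
The component is the Gårding cone `G_k = {λ | σ_j(λ) > 0 for all j ≤ k}`, which is visibly open,
symmetric and a cone. It is closed under addition, hence convex: by induction on `k`, together
with the superadditivity of `σ_{k+1}/σ_k` on `G_k`. Euler's identity writes `(k+2) σ_{k+2}/σ_{k+1}`
as a sum of terms `λ_i - λ_i² / (λ_i + σ_{k+1}/σ_k (λ|i))`, each superadditive by Cauchy–Schwarz,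
provided `λ|i ∈ G_k` whenever `λ ∈ G_{k+1}`; that follows from Newton's inequality
`σ_k σ_{k+2} ≤ σ_{k+1}²`. Being convex and containing `(1, …, 1)`, `G_k` lies in the component.
Conversely `G_k` is relatively closed in `{σ_k > 0}`: at a limit point with `σ_{j+1} > 0` and
`σ_j = 0`, the nonnegative `σ_j(λ|i)` sum to `(n - j) σ_j = 0`, so all vanish, and Euler's identity
gives `σ_{j+1} = 0`.
-/

theorem Nat.choose_mul_choose_add_two_le_sq (n k : ℕ) :
    n.choose k * n.choose (k + 2) ≤ n.choose (k + 1) ^ 2 := by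
  rcases le_or_gt n k with hn | hk
  · simp [Nat.choose_eq_zero_of_lt (show n < k + 2 by omega)]
  have key : n.choose k * n.choose (k + 2) * ((k + 2) * (n - k)) ≤
      n.choose (k + 1) ^ 2 * ((k + 2) * (n - k)) :=
    calc n.choose k * n.choose (k + 2) * ((k + 2) * (n - k))
        = (n.choose k * (n - k)) * (n.choose (k + 2) * (k + 2)) := by ring
      _ = n.choose (k + 1) ^ 2 * ((k + 1) * (n - (k + 1))) := by
        rw [← Nat.choose_succ_right_eq, Nat.choose_succ_right_eq n (k + 1)]; ring
      _ ≤ _ := Nat.mul_le_mul_left _ (Nat.mul_le_mul (by omega) (by omega))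
  exact Nat.le_of_mul_le_mul_right key (Nat.mul_pos (by omega) (by omega))

namespace Multiset

section CommSemiring

variable {R : Type*} [CommSemiring R]

theorem esymm_cons_succ (a : R) (s : Multiset R) (j : ℕ) :
    (a ::ₘ s).esymm (j + 1) = s.esymm (j + 1) + a * s.esymm j := by
  simp only [esymm, powersetCard_cons, map_add, sum_add, map_map, Function.comp_def, prod_cons,
    sum_map_mul_left]

theorem esymm_eq_zero_of_card_lt {s : Multiset R} {j : ℕ} (h : card s < j) : s.esymm j = 0 := by
  simp [esymm, powersetCard_eq_empty _ h]

theorem esymm_card (s : Multiset R) : s.esymm (card s) = s.prod := by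
  simp [esymm, powersetCard_self]

theorem esymm_zero (s : Multiset R) : s.esymm 0 = 1 := by
  simp [esymm, powersetCard_zero_left]

theorem esymm_one (s : Multiset R) : s.esymm 1 = s.sum := by
  simp [esymm, powersetCard_one]

end CommSemiring

theorem prod_mul_esymm_map_inv {K : Type*} [Field K] {s : Multiset K} (h0 : (0 : K) ∉ s)
    {r q : ℕ} (hrq : r + q = card s) : s.prod * (s.map (·⁻¹)).esymm r = s.esymm q := by
  induction s using Multiset.induction_on generalizing r q with
  | empty =>
    obtain ⟨rfl, rfl⟩ : r = 0 ∧ q = 0 := by simpa using hrq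
    simp [esymm_zero]
  | cons a s ih =>
    have ha : a ≠ 0 := fun h => h0 (h ▸ mem_cons_self a s)
    have h0s : (0 : K) ∉ s := fun h => h0 (mem_cons_of_mem h)
    rw [card_cons] at hrq
    rcases r with _ | t
    · rw [zero_add] at hrq
      rw [esymm_zero, mul_one, hrq, ← card_cons, esymm_card]
    have hlow := ih h0s (r := t) (q := q) (by omega)
    rw [map_cons, esymm_cons_succ, prod_cons]
    rcases q with _ | q
    · rw [esymm_eq_zero_of_card_lt (by rw [card_map]; omega), esymm_zero]
      rw [esymm_zero] at hlow
      field_simp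
      simpa using hlow
    · have hhigh := ih h0s (r := t + 1) (q := q) (by omega)
      rw [esymm_cons_succ, ← hlow, ← hhigh]
      field_simp
      ring

-- By Rolle, the derivative of `∏ (X - x)` splits over `ℝ`; `t` is its multiset of roots.
open Polynomial in
theorem exists_card_mul_esymm_eq (s : Multiset ℝ) :
    ∃ t : Multiset ℝ, card t = card s - 1 ∧
      ∀ r, (card s : ℝ) * t.esymm r = (card s - r) * s.esymm r := by
  set m := card s
  set f : ℝ[X] := (s.map fun x => X - C x).prod
  have hf_roots : f.roots = s := roots_multiset_prod_X_sub_C s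
  have hf_deg : f.natDegree = m := natDegree_multiset_prod_X_sub_C_eq_card s
  have hf_monic : f.Monic := monic_multiset_prod_of_monic _ _ fun x _ => monic_X_sub_C x
  set g := derivative f
  have hg_deg : g.natDegree ≤ m - 1 := hf_deg ▸ natDegree_derivative_le f
  have hg_card : card g.roots = m - 1 := by
    have h1 : m ≤ card g.roots + 1 := by
      simpa only [hf_roots] using card_roots_le_derivative f
    have h2 := card_roots' g
    omega
  have hg_split : card g.roots = g.natDegree := by
    have := card_roots' g
    omega
  refine ⟨g.roots, hg_card, fun r => ?_⟩
  rcases lt_or_ge r m with hr | hr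
  · have hf_coeff : f.coeff (m - r) = (-1) ^ r * s.esymm r := by
      rw [prod_X_sub_C_coeff s (by omega), show m - (m - r) = r by omega]
    have hg_lead : g.leadingCoeff = m := by
      rw [leadingCoeff, ← hg_split, hg_card, coeff_derivative, show m - 1 + 1 = m by omega]
      rw [← hf_deg, hf_monic.coeff_natDegree, Nat.cast_sub (by omega)]
      ring
    have hvieta := coeff_eq_esymm_roots_of_card hg_split (k := m - 1 - r) (by omega)
    rw [← hg_split, hg_card, show m - 1 - (m - 1 - r) = r by omega, hg_lead, coeff_derivative,
      show m - 1 - r + 1 = m - r by omega, hf_coeff, Nat.cast_sub (by omega),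
      Nat.cast_sub (by omega)] at hvieta
    have hsign : ((-1 : ℝ) ^ r) ^ 2 = 1 := by rw [← pow_mul, mul_comm, pow_mul]; simp
    linear_combination (-(-1 : ℝ) ^ r) * hvieta
      + (s.esymm r * (m - r) - m * g.roots.esymm r) * hsign
  · rcases hr.eq_or_lt with rfl | hr
    · rw [sub_self, zero_mul]
      rcases Nat.eq_zero_or_pos m with h0 | h0
      · simp [h0]
      · rw [esymm_eq_zero_of_card_lt (by omega), mul_zero]
    · rw [esymm_eq_zero_of_card_lt (by omega), esymm_eq_zero_of_card_lt hr, mul_zero, mul_zero]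

-- Vanishes for `r > card s`, where the binomial coefficient does.
noncomputable def esymmMean (s : Multiset ℝ) (r : ℕ) : ℝ := s.esymm r / (card s).choose r

theorem exists_esymmMean_eq (s : Multiset ℝ) :
    ∃ t : Multiset ℝ, card t = card s - 1 ∧ ∀ r < card s, t.esymmMean r = s.esymmMean r := by
  obtain ⟨t, ht, hrel⟩ := exists_card_mul_esymm_eq s
  refine ⟨t, ht, fun r hr => ?_⟩
  obtain ⟨m, hm⟩ : ∃ m, card s = m + 1 := ⟨card s - 1, by omega⟩
  have hchoose : (m.choose r : ℝ) * (m + 1) = ((m + 1).choose r : ℝ) * (m + 1 - r) := by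
    have h := congrArg (Nat.cast (R := ℝ)) (Nat.choose_mul_succ_eq m r)
    push_cast [Nat.cast_sub (show r ≤ m + 1 by omega)] at h
    exact h
  have hpos : (0 : ℝ) < m.choose r := by exact_mod_cast Nat.choose_pos (by omega)
  have hpos' : (0 : ℝ) < (m + 1).choose r := by exact_mod_cast Nat.choose_pos (by omega)
  have hr' : (r : ℝ) < m + 1 := by exact_mod_cast (hm ▸ hr)
  rw [esymmMean, esymmMean, ht, hm, Nat.add_sub_cancel, div_eq_div_iff hpos.ne' hpos'.ne']
  have := hrel r
  rw [hm] at this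
  push_cast at this
  apply mul_left_cancel₀ (show (m + 1 - r : ℝ) ≠ 0 by linarith)
  linear_combination (m.choose r : ℝ) * this - t.esymm r * hchoose

theorem esymmMean_eq_prod_mul {s : Multiset ℝ} (h0 : (0 : ℝ) ∉ s) {r q : ℕ}
    (hrq : r + q = card s) : s.esymmMean q = s.prod * (s.map (·⁻¹)).esymmMean r := by
  rw [esymmMean, esymmMean, card_map, ← prod_mul_esymm_map_inv h0 hrq,
    Nat.choose_symm_of_eq_add hrq.symm, mul_div_assoc]

theorem esymmMean_eq_zero_of_card_lt {s : Multiset ℝ} {r : ℕ} (h : card s < r) :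
    s.esymmMean r = 0 := by
  rw [esymmMean, esymm_eq_zero_of_card_lt h, zero_div]

theorem esymmMean_mul_le_sq_of_card_pred {s : Multiset ℝ} {j : ℕ} (hj : j + 2 < card s)
    (ih : ∀ t : Multiset ℝ, card t = card s - 1 →
      t.esymmMean j * t.esymmMean (j + 2) ≤ t.esymmMean (j + 1) ^ 2) :
    s.esymmMean j * s.esymmMean (j + 2) ≤ s.esymmMean (j + 1) ^ 2 := by
  obtain ⟨t, ht, heq⟩ := exists_esymmMean_eq s
  rw [← heq j (by omega), ← heq (j + 1) (by omega), ← heq (j + 2) hj]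
  exact ih t ht

/-- **Newton's inequality.** Differentiating `∏ (X - x)` lowers `card s` without changing the
means involved, which reduces it to `card s = j + 2`; there the reciprocals of the points turn it
into the case `j = 0`. -/
theorem esymmMean_mul_le_sq (s : Multiset ℝ) (j : ℕ) :
    s.esymmMean j * s.esymmMean (j + 2) ≤ s.esymmMean (j + 1) ^ 2 := by
  induction hs : card s using Nat.strong_induction_on generalizing s j with
  | _ m ih =>
  rcases lt_trichotomy (j + 2) m with hlt | heq | hgt
  · exact esymmMean_mul_le_sq_of_card_pred (hs ▸ hlt)
      fun t ht => ih (m - 1) (by omega) t j (by omega)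
  · rcases j with _ | j
    · obtain ⟨x, y, rfl⟩ := card_eq_two.1 (hs.trans heq.symm)
      suffices x * y ≤ ((x + y) / 2) ^ 2 by simpa [esymmMean, esymm_zero] using this
      nlinarith [sq_nonneg (x - y)]
    by_cases h0 : (0 : ℝ) ∈ s
    · have htop : s.esymmMean (j + 1 + 2) = 0 := by
        rw [esymmMean, heq, ← hs, esymm_card, prod_eq_zero h0, zero_div]
      rw [htop, mul_zero]
      positivity
    have hτ : 2 < card (s.map (·⁻¹)) := by rw [card_map]; omega
    have key := esymmMean_mul_le_sq_of_card_pred hτ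
      fun t ht => ih (m - 1) (by omega) t 0 (by rw [card_map] at ht; omega)
    rw [esymmMean_eq_prod_mul h0 (r := 2) (by omega),
      esymmMean_eq_prod_mul h0 (r := 0) (by omega),
      esymmMean_eq_prod_mul h0 (r := 1) (by omega)]
    nlinarith [mul_le_mul_of_nonneg_left key (sq_nonneg s.prod)]
  · rw [esymmMean_eq_zero_of_card_lt (r := j + 2) (hs ▸ hgt), mul_zero]
    positivity

theorem esymm_mul_le_sq (s : Multiset ℝ) (j : ℕ) :
    s.esymm j * s.esymm (j + 2) ≤ s.esymm (j + 1) ^ 2 := by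
  rcases lt_or_ge (card s) (j + 2) with h | h
  · rw [esymm_eq_zero_of_card_lt h, mul_zero]
    positivity
  have hc : ∀ r ≤ card s, (0 : ℝ) < (card s).choose r := fun r hr => by
    exact_mod_cast Nat.choose_pos hr
  have hlc : ((card s).choose j * (card s).choose (j + 2) : ℝ) ≤ (card s).choose (j + 1) ^ 2 := by
    exact_mod_cast Nat.choose_mul_choose_add_two_le_sq _ _
  have hN := esymmMean_mul_le_sq s j
  rw [esymmMean, esymmMean, esymmMean, div_mul_div_comm, div_pow,
    div_le_div_iff₀ (mul_pos (hc j (by omega)) (hc _ h)) (pow_pos (hc _ (by omega)) 2)] at hN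
  refine le_of_mul_le_mul_right ?_ (pow_pos (hc (j + 1) (by omega)) 2)
  calc _ ≤ s.esymm (j + 1) ^ 2 * ((card s).choose j * (card s).choose (j + 2) : ℝ) := hN
    _ ≤ _ := mul_le_mul_of_nonneg_left hlc (sq_nonneg _)

end Multiset

theorem add_sq_div_add_le {a b c d : ℝ} (hc : 0 < c) (hd : 0 < d) :
    (a + b) ^ 2 / (c + d) ≤ a ^ 2 / c + b ^ 2 / d := by
  simpa [Fin.sum_univ_two] using Finset.sq_sum_div_le_sum_sq_div Finset.univ ![a, b]
    (g := ![c, d]) (by simp [Fin.forall_fin_two, hc, hd])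

section Esymm

variable {ι : Type*}

noncomputable def esymmOn (A : Finset ι) (j : ℕ) (l : ι → ℝ) : ℝ := (A.val.map l).esymm j

theorem esymmOn_eq_sum (A : Finset ι) (j : ℕ) (l : ι → ℝ) :
    esymmOn A j l = ∑ s ∈ A.powersetCard j, ∏ i ∈ s, l i :=
  Finset.esymm_map_val l A j

theorem esymmOn_zero (A : Finset ι) (l : ι → ℝ) : esymmOn A 0 l = 1 :=
  Multiset.esymm_zero _

theorem esymmOn_one (A : Finset ι) (l : ι → ℝ) : esymmOn A 1 l = ∑ i ∈ A, l i :=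
  Multiset.esymm_one _

theorem esymmOn_smul (A : Finset ι) (j : ℕ) (c : ℝ) (l : ι → ℝ) :
    esymmOn A j (c • l) = c ^ j * esymmOn A j l := by
  rw [esymmOn, esymmOn, ← smul_eq_mul, Multiset.pow_smul_esymm, Multiset.map_map]
  rfl

theorem continuous_esymmOn (A : Finset ι) (j : ℕ) : Continuous (esymmOn A j) := by
  simp_rw [funext (esymmOn_eq_sum A j)]
  fun_prop

theorem esymmOn_pos {A : Finset ι} {l : ι → ℝ} (hl : ∀ i ∈ A, 0 < l i) {j : ℕ} (hj : j ≤ A.card) :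
    0 < esymmOn A j l := by
  rw [esymmOn_eq_sum]
  exact Finset.sum_pos (fun s hs => Finset.prod_pos fun i hi =>
    hl i ((Finset.mem_powersetCard.1 hs).1 hi)) (Finset.powersetCard_nonempty.2 hj)

variable [DecidableEq ι]

theorem esymmOn_insert_succ {A : Finset ι} {a : ι} (ha : a ∉ A) (j : ℕ) (l : ι → ℝ) :
    esymmOn (insert a A) (j + 1) l = esymmOn A (j + 1) l + l a * esymmOn A j l := by
  rw [esymmOn, Finset.insert_val_of_notMem ha, Multiset.map_cons, Multiset.esymm_cons_succ]
  rfl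

theorem esymmOn_erase_succ {A : Finset ι} {i : ι} (hi : i ∈ A) (j : ℕ) (l : ι → ℝ) :
    esymmOn A (j + 1) l = esymmOn (A.erase i) (j + 1) l + l i * esymmOn (A.erase i) j l := by
  conv_lhs => rw [← Finset.insert_erase hi]
  exact esymmOn_insert_succ (Finset.notMem_erase i A) j l

-- Euler's identity, as `∂σ_{j+1}/∂(l i) = σ_j(A \ {i})`.
theorem succ_mul_esymmOn_succ (A : Finset ι) (j : ℕ) (l : ι → ℝ) :
    (j + 1) * esymmOn A (j + 1) l = ∑ i ∈ A, l i * esymmOn (A.erase i) j l := by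
  induction A using Finset.induction_on generalizing j with
  | empty => rw [esymmOn, Multiset.esymm_eq_zero_of_card_lt (by simp)]; simp
  | insert a B ha ih =>
    rw [Finset.sum_insert ha, Finset.erase_insert ha]
    rcases j with _ | j
    · simp [esymmOn_zero, esymmOn_one, Finset.sum_insert ha]
    have hB : ∀ i ∈ B, esymmOn ((insert a B).erase i) (j + 1) l =
        esymmOn (B.erase i) (j + 1) l + l a * esymmOn (B.erase i) j l := fun i hi => by
      rw [Finset.erase_insert_of_ne (ne_of_mem_of_not_mem hi ha).symm,
        esymmOn_insert_succ (fun h => ha (Finset.mem_of_mem_erase h))]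
    rw [Finset.sum_congr rfl fun i hi => by rw [hB i hi], esymmOn_insert_succ ha]
    simp only [mul_add, Finset.sum_add_distrib, ← ih]
    simp only [mul_left_comm _ (l a), ← Finset.mul_sum, ← ih]
    push_cast
    ring

theorem sum_esymmOn_erase (A : Finset ι) (j : ℕ) (l : ι → ℝ) :
    ∑ i ∈ A, esymmOn (A.erase i) j l = (A.card - j) * esymmOn A j l := by
  rcases j with _ | j
  · simp [esymmOn_zero]
  have h := succ_mul_esymmOn_succ A j l
  rw [Finset.sum_congr rfl fun i hi => (eq_sub_of_add_eq (esymmOn_erase_succ hi j l).symm),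
    Finset.sum_sub_distrib, ← h]
  simp only [Finset.sum_const, nsmul_eq_mul]
  push_cast
  ring

end Esymm

section GardingCone

variable {ι : Type*}

-- The condition for `j = 0` is vacuous, as `σ_0 = 1`.
def gardingCone (A : Finset ι) (k : ℕ) : Set (ι → ℝ) := {l | ∀ j ≤ k, 0 < esymmOn A j l}

noncomputable def esymmQuot (A : Finset ι) (k : ℕ) (l : ι → ℝ) : ℝ :=
  esymmOn A (k + 1) l / esymmOn A k l

theorem isOpen_gardingCone (A : Finset ι) (k : ℕ) : IsOpen (gardingCone A k) := by
  have h : gardingCone A k = ⋂ j ∈ Set.Iic k, {l | 0 < esymmOn A j l} := by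
    ext l
    simp [gardingCone]
  rw [h]
  exact (Set.finite_Iic k).isOpen_biInter fun j _ =>
    isOpen_lt continuous_const (continuous_esymmOn A j)

theorem gardingCone_anti {A : Finset ι} {k k' : ℕ} (hk : k' ≤ k) :
    gardingCone A k ⊆ gardingCone A k' :=
  fun _ hl j hj => hl j (hj.trans hk)

theorem mem_gardingCone_zero (A : Finset ι) (l : ι → ℝ) : l ∈ gardingCone A 0 := by
  intro j hj
  rw [Nat.le_zero.1 hj, esymmOn_zero]
  exact one_pos

theorem mem_gardingCone_succ {A : Finset ι} {k : ℕ} {l : ι → ℝ} :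
    l ∈ gardingCone A (k + 1) ↔ l ∈ gardingCone A k ∧ 0 < esymmOn A (k + 1) l := by
  simp only [gardingCone, Set.mem_ofPred_eq, Nat.le_succ_iff_eq_or_le]
  grind

theorem smul_mem_gardingCone {A : Finset ι} {k : ℕ} {l : ι → ℝ} (hl : l ∈ gardingCone A k)
    {c : ℝ} (hc : 0 < c) : c • l ∈ gardingCone A k := fun j hj => by
  rw [esymmOn_smul]
  exact mul_pos (pow_pos hc j) (hl j hj)

theorem pos_mem_gardingCone {A : Finset ι} {k : ℕ} (hk : k ≤ A.card) {l : ι → ℝ}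
    (hl : ∀ i ∈ A, 0 < l i) : l ∈ gardingCone A k :=
  fun _ hj => esymmOn_pos hl (hj.trans hk)

theorem add_mem_gardingCone_succ {A : Finset ι} {k : ℕ} {x y : ι → ℝ}
    (hx : x ∈ gardingCone A (k + 1)) (hy : y ∈ gardingCone A (k + 1))
    (hxy : x + y ∈ gardingCone A k)
    (hq : esymmQuot A k x + esymmQuot A k y ≤ esymmQuot A k (x + y)) :
    x + y ∈ gardingCone A (k + 1) := by
  have hquot : ∀ z ∈ gardingCone A (k + 1), 0 < esymmQuot A k z := fun z hz =>
    div_pos (hz (k + 1) le_rfl) (hz k (Nat.le_succ k))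
  refine mem_gardingCone_succ.2 ⟨hxy, ?_⟩
  have := (add_pos (hquot x hx) (hquot y hy)).trans_le hq
  exact (div_pos_iff_of_pos_right (hxy k le_rfl)).1 this

variable [DecidableEq ι]

-- If `σ_{k+1}(A \ {i}) ≤ 0`, then `σ_{k+1}(A), σ_{k+2}(A) > 0` force
-- `σ_k σ_{k+2} > σ_{k+1}²` on `A \ {i}`, against Newton's inequality.
theorem erase_mem_gardingCone {A : Finset ι} {k : ℕ} {l : ι → ℝ} (hl : l ∈ gardingCone A (k + 1))
    {i : ι} (hi : i ∈ A) : l ∈ gardingCone (A.erase i) k := by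
  induction k with
  | zero => exact mem_gardingCone_zero _ _
  | succ k ih =>
    have hlow := ih (gardingCone_anti (Nat.le_succ _) hl)
    refine mem_gardingCone_succ.2 ⟨hlow, ?_⟩
    have ha := hlow k le_rfl
    have h1 := hl (k + 1) (by omega)
    have h2 := hl (k + 2) (by omega)
    rw [esymmOn_erase_succ hi] at h1 h2
    have hN := Multiset.esymm_mul_le_sq ((A.erase i).val.map l) k
    change esymmOn _ k l * esymmOn _ (k + 2) l ≤ esymmOn _ (k + 1) l ^ 2 at hN
    refine lt_of_not_ge fun hb => ?_
    nlinarith [mul_pos ha ha]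

theorem esymmOn_succ_div_erase {A : Finset ι} {i : ι} (hi : i ∈ A) {k : ℕ} {l : ι → ℝ}
    (h : esymmOn (A.erase i) k l ≠ 0) :
    esymmOn A (k + 1) l / esymmOn (A.erase i) k l = l i + esymmQuot (A.erase i) k l := by
  rw [esymmQuot, esymmOn_erase_succ hi]
  field_simp
  ring

theorem succ_mul_esymmQuot_succ {A : Finset ι} {k : ℕ} {l : ι → ℝ} (h : esymmOn A (k + 1) l ≠ 0) :
    (k + 2) * esymmQuot A (k + 1) l =
      ∑ i ∈ A, (l i - l i ^ 2 / (esymmOn A (k + 1) l / esymmOn (A.erase i) k l)) := by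
  have euler := succ_mul_esymmOn_succ A (k + 1) l
  push_cast at euler
  rw [esymmQuot, ← mul_div_assoc, div_eq_iff h, show (k : ℝ) + 2 = k + 1 + 1 by ring, euler,
    Finset.sum_mul]
  refine Finset.sum_congr rfl fun i hi => ?_
  rw [div_div_eq_mul_div, sub_mul, div_mul_cancel₀ _ h, esymmOn_erase_succ hi k l]
  ring

-- Each summand `l i - l i ^ 2 / (l i + esymmQuot (A.erase i) k l)` of `succ_mul_esymmQuot_succ`
-- is superadditive by Cauchy–Schwarz.
theorem esymmQuot_add_le_succ {A : Finset ι} {k : ℕ}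
    (hA : ∀ i ∈ A, ∀ x y, x ∈ gardingCone (A.erase i) k → y ∈ gardingCone (A.erase i) k →
      esymmQuot (A.erase i) k x + esymmQuot (A.erase i) k y ≤ esymmQuot (A.erase i) k (x + y))
    {x y : ι → ℝ} (hx : x ∈ gardingCone A (k + 1)) (hy : y ∈ gardingCone A (k + 1))
    (hxy : x + y ∈ gardingCone A (k + 1)) :
    esymmQuot A (k + 1) x + esymmQuot A (k + 1) y ≤ esymmQuot A (k + 1) (x + y) := by
  have hD : ∀ z ∈ gardingCone A (k + 1), ∀ i ∈ A,
      0 < esymmOn A (k + 1) z / esymmOn (A.erase i) k z := fun z hz i hi =>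
    div_pos (hz (k + 1) le_rfl) (erase_mem_gardingCone hz hi k le_rfl)
  refine le_of_mul_le_mul_left ?_ (by positivity : (0 : ℝ) < k + 2)
  rw [mul_add, succ_mul_esymmQuot_succ (hx (k + 1) le_rfl).ne',
    succ_mul_esymmQuot_succ (hy (k + 1) le_rfl).ne', succ_mul_esymmQuot_succ (hxy (k + 1) le_rfl).ne',
    ← Finset.sum_add_distrib]
  refine Finset.sum_le_sum fun i hi => ?_
  have hsum : esymmOn A (k + 1) x / esymmOn (A.erase i) k x +
      esymmOn A (k + 1) y / esymmOn (A.erase i) k y ≤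
        esymmOn A (k + 1) (x + y) / esymmOn (A.erase i) k (x + y) := by
    have hpos := fun z (hz : z ∈ gardingCone A (k + 1)) =>
      (erase_mem_gardingCone hz hi k le_rfl).ne'
    rw [esymmOn_succ_div_erase hi (hpos x hx), esymmOn_succ_div_erase hi (hpos y hy),
      esymmOn_succ_div_erase hi (hpos _ hxy), Pi.add_apply]
    linarith [hA i hi x y (erase_mem_gardingCone hx hi) (erase_mem_gardingCone hy hi)]
  have hcs := (div_le_div_of_nonneg_left (sq_nonneg (x i + y i))
    (add_pos (hD x hx i hi) (hD y hy i hi)) hsum).trans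
    (add_sq_div_add_le (a := x i) (b := y i) (hD x hx i hi) (hD y hy i hi))
  rw [Pi.add_apply]
  linarith

theorem add_mem_gardingCone_and_esymmQuot_add_le (k : ℕ) (A : Finset ι) {x y : ι → ℝ}
    (hx : x ∈ gardingCone A k) (hy : y ∈ gardingCone A k) :
    x + y ∈ gardingCone A k ∧ esymmQuot A k x + esymmQuot A k y ≤ esymmQuot A k (x + y) := by
  induction k generalizing A x y with
  | zero =>
    refine ⟨mem_gardingCone_zero A _, le_of_eq ?_⟩
    simp [esymmQuot, esymmOn_zero, esymmOn_one, Finset.sum_add_distrib]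
  | succ k ih =>
    have hxy := add_mem_gardingCone_succ hx hy
      (ih A (gardingCone_anti k.le_succ hx) (gardingCone_anti k.le_succ hy)).1
      (ih A (gardingCone_anti k.le_succ hx) (gardingCone_anti k.le_succ hy)).2
    exact ⟨hxy, esymmQuot_add_le_succ (fun i _ x y hx hy => (ih _ hx hy).2) hx hy hxy⟩

theorem add_mem_gardingCone {A : Finset ι} {k : ℕ} {x y : ι → ℝ} (hx : x ∈ gardingCone A k)
    (hy : y ∈ gardingCone A k) : x + y ∈ gardingCone A k :=
  (add_mem_gardingCone_and_esymmQuot_add_le k A hx hy).1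

theorem convex_gardingCone (A : Finset ι) (k : ℕ) : Convex ℝ (gardingCone A k) :=
  (⟨gardingCone A k, fun _ hc _ hl => smul_mem_gardingCone hl hc,
    fun _ hx _ hy => add_mem_gardingCone hx hy⟩ : ConvexCone ℝ (ι → ℝ)).convex

theorem esymmOn_pos_of_succ {A : Finset ι} {j : ℕ} {z : ι → ℝ}
    (hsucc : 0 < esymmOn A (j + 1) z) (hj : 0 ≤ esymmOn A j z)
    (herase : ∀ i ∈ A, 0 ≤ esymmOn (A.erase i) j z) : 0 < esymmOn A j z := by
  refine hj.lt_of_ne fun h0 => hsucc.ne' ?_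
  have hzero : ∀ i ∈ A, esymmOn (A.erase i) j z = 0 :=
    (Finset.sum_eq_zero_iff_of_nonneg herase).1 (by rw [sum_esymmOn_erase, ← h0, mul_zero])
  have euler := succ_mul_esymmOn_succ A j z
  rw [Finset.sum_eq_zero fun i hi => by rw [hzero i hi, mul_zero]] at euler
  exact (mul_eq_zero.1 euler).resolve_left (by positivity)

theorem mem_gardingCone_of_mem_closure {A : Finset ι} {k : ℕ} {z : ι → ℝ}
    (hz : z ∈ closure (gardingCone A k)) (hk : 0 < esymmOn A k z) : z ∈ gardingCone A k := by
  have hnonneg : ∀ (B : Finset ι) (j : ℕ), gardingCone A k ⊆ {l | 0 < esymmOn B j l} →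
      0 ≤ esymmOn B j z := fun B j hsub =>
    closure_lt_subset_le continuous_const (continuous_esymmOn B j) (closure_mono hsub hz)
  intro j hj
  induction h : k - j generalizing j with
  | zero => rwa [show j = k by omega]
  | succ d ih =>
    refine esymmOn_pos_of_succ (ih (j + 1) (by omega) (by omega))
      (hnonneg A j fun l hl => hl j hj) fun i hi => ?_
    obtain ⟨k, rfl⟩ : ∃ k', k = k' + 1 := ⟨k - 1, by omega⟩
    exact hnonneg _ j fun l hl => erase_mem_gardingCone hl hi j (by omega)

end GardingCone

theorem esymmOn_comp_perm {ι : Type*} [Fintype ι] (j : ℕ) (l : ι → ℝ) (σ : Equiv.Perm ι) :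
    esymmOn Finset.univ j (l ∘ σ) = esymmOn Finset.univ j l := by
  rw [esymmOn, esymmOn, ← Multiset.map_map, Multiset.map_univ_val_equiv]

theorem esym_eq_esymmOn (n k : ℕ) : esym n k = esymmOn Finset.univ k :=
  funext fun l => (esymmOn_eq_sum _ _ l).symm

theorem GammaK_eq_gardingCone {n k : ℕ} (hkn : k ≤ n) :
    GammaK n k = gardingCone Finset.univ k := by
  have hone : (fun _ => (1 : ℝ)) ∈ gardingCone (Finset.univ : Finset (Fin n)) k :=
    pos_mem_gardingCone (by simpa using hkn) fun _ _ => one_pos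
  have hsub : gardingCone Finset.univ k ⊆ {l | 0 < esym n k l} := fun l hl => by
    rw [Set.mem_ofPred_eq, esym_eq_esymmOn]
    exact hl k le_rfl
  refine Set.Subset.antisymm ?_
    ((convex_gardingCone _ _).isPreconnected.subset_connectedComponentIn hone hsub)
  refine isPreconnected_connectedComponentIn.subset_of_closure_inter_subset
    (isOpen_gardingCone _ _) ⟨_, mem_connectedComponentIn (hsub hone), hone⟩ ?_
  rintro z ⟨hz, hzΓ⟩
  have hzk : z ∈ {l | 0 < esym n k l} := connectedComponentIn_subset _ _ hzΓ
  rw [Set.mem_ofPred_eq, esym_eq_esymmOn] at hzk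
  exact mem_gardingCone_of_mem_closure hz hzk

theorem stmt8 {n k : ℕ} (hk : 1 ≤ k) (hkn : k ≤ n) :
    IsOpen (GammaK n k) ∧ Convex ℝ (GammaK n k) ∧
      (∀ l ∈ GammaK n k, ∀ σ : Equiv.Perm (Fin n), (l ∘ σ) ∈ GammaK n k) ∧
      (∀ l ∈ GammaK n k, ∀ s : ℝ, 0 < s → s • l ∈ GammaK n k) ∧
      {l : Fin n → ℝ | ∀ i, 0 < l i} ⊆ GammaK n k ∧
      GammaK n k ⊆ {l : Fin n → ℝ | 0 < ∑ i, l i} := by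
  rw [GammaK_eq_gardingCone hkn]
  refine ⟨isOpen_gardingCone _ _, convex_gardingCone _ _,
    fun l hl σ j hj => (esymmOn_comp_perm j l σ).symm ▸ hl j hj,
    fun l hl s hs => smul_mem_gardingCone hl hs,
    fun l hl => pos_mem_gardingCone (by simpa using hkn) fun i _ => hl i, fun l hl => ?_⟩
  simpa [esymmOn_one] using hl 1 hk
end

section
/- Let $n \ge 3$ and let $u$ be a continuous positive function on $\mathbb{R}^n$ such that for all $x \in \mathbb{R}^n$, all $\lambda > 0$, and all $y$ with $|y - x| \ge \lambda$, one has $u_{x,\lambda}(y) \le u(y)$, where $u_{x,\lambda}(y) := \frac{\lambda^{n-2}}{|y-x|^{n-2}} u\left(x + \frac{\lambda^2(y-x)}{|y-x|^2}\right)$ is the Kelvin transform of $u$ with respect to the ball $B_\lambda(x)$. Then $u$ is constant: $u \equiv u(0)$. -/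
open Filter MeasureTheory

/-!
Given `z ≠ y` with `d = ‖z - y‖`, put the centre `x` on the ray from `y` through `z`, at distance
`t` beyond `z`, and take `λ² = t (t + d)`. Then `|y - x| = t + d ≥ λ` and the inversion in
`∂B_λ(x)` maps `y` to `z`, so the hypothesis reads `(t / (t + d))^((n-2)/2) u(z) ≤ u(y)`.
Letting `t → ∞` gives `u(z) ≤ u(y)`, and by symmetry `u(z) = u(y)`.
-/

section Extension

variable {E : Type*} [NormedAddCommGroup E] [NormedSpace ℝ E]

theorem sub_add_smul_sub_eq {y z : E} (hzy : z ≠ y) (t : ℝ) :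
    y - (z + (t / ‖z - y‖) • (z - y)) = (-((t + ‖z - y‖) / ‖z - y‖)) • (z - y) := by
  have hd : ‖z - y‖ ≠ 0 := norm_ne_zero_iff.mpr (sub_ne_zero.mpr hzy)
  rw [neg_smul, add_div, div_self hd, add_smul, one_smul]
  abel

theorem norm_sub_add_smul_sub {y z : E} (hzy : z ≠ y) {t : ℝ} (ht : 0 ≤ t) :
    ‖y - (z + (t / ‖z - y‖) • (z - y))‖ = t + ‖z - y‖ := by
  have hd : 0 < ‖z - y‖ := norm_pos_iff.mpr (sub_ne_zero.mpr hzy)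
  rw [sub_add_smul_sub_eq hzy, norm_smul, norm_neg, Real.norm_of_nonneg (by positivity)]
  field_simp

end Extension

theorem kelvin_add_smul_sub {n : ℕ} (u : EuclideanSpace ℝ (Fin n) → ℝ) {y z : EuclideanSpace ℝ (Fin n)} (hzy : z ≠ y) {t : ℝ}
    (ht : 0 < t) :
    kelvin u (z + (t / ‖z - y‖) • (z - y)) (√(t * (t + ‖z - y‖))) y =
      √(t / (t + ‖z - y‖)) ^ (n - 2) * u z := by
  set d := ‖z - y‖
  have hd : 0 < d := norm_pos_iff.mpr (sub_ne_zero.mpr hzy)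
  have htd : 0 < t + d := by positivity
  have hsq : √(t * (t + d)) ^ 2 = t * (t + d) := Real.sq_sqrt (by positivity)
  have hpoint : z + (t / d) • (z - y) +
      (√(t * (t + d)) ^ 2 / ‖y - (z + (t / d) • (z - y))‖ ^ 2) •
        (y - (z + (t / d) • (z - y))) = z := by
    rw [norm_sub_add_smul_sub hzy ht.le, sub_add_smul_sub_eq hzy, hsq, smul_smul,
      show t * (t + d) / (t + d) ^ 2 * -((t + d) / d) = -(t / d) by field_simp]
    module
  have hratio : √(t * (t + d)) / (t + d) = √(t / (t + d)) := by
    rw [show t / (t + d) = t * (t + d) / (t + d) ^ 2 by field_simp,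
      Real.sqrt_div' _ (by positivity), Real.sqrt_sq htd.le]
  rw [kelvin, hpoint, norm_sub_add_smul_sub hzy ht.le, ← div_pow, hratio]

theorem tendsto_sqrt_div_add_pow_atTop (d : ℝ) (k : ℕ) :
    Tendsto (fun t : ℝ => √(t / (t + d)) ^ k) atTop (nhds 1) := by
  have hdiv : Tendsto (fun t : ℝ => t / (t + d)) atTop (nhds 1) := by
    have hsub : Tendsto (fun t : ℝ => 1 - d / (t + d)) atTop (nhds (1 - 0)) :=
      tendsto_const_nhds.sub <|
        tendsto_const_nhds.div_atTop (tendsto_atTop_add_const_right _ _ tendsto_id)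
    rw [sub_zero] at hsub
    refine hsub.congr' ?_
    filter_upwards [eventually_gt_atTop (-d)] with t ht
    have : t + d ≠ 0 := by linarith
    field_simp
    ring
  simpa using ((Real.continuous_sqrt.tendsto 1).comp hdiv).pow k

theorem le_of_forall_kelvin_le {n : ℕ} (u : EuclideanSpace ℝ (Fin n) → ℝ)
    (hms : ∀ (x : EuclideanSpace ℝ (Fin n)) (l : ℝ), 0 < l →
      ∀ y : EuclideanSpace ℝ (Fin n), l ≤ ‖y - x‖ → kelvin u x l y ≤ u y)
    (z y : EuclideanSpace ℝ (Fin n)) : u z ≤ u y := by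
  rcases eq_or_ne z y with rfl | hzy
  · exact le_rfl
  have hd : 0 < ‖z - y‖ := norm_pos_iff.mpr (sub_ne_zero.mpr hzy)
  have hbound : ∀ t > 0, √(t / (t + ‖z - y‖)) ^ (n - 2) * u z ≤ u y := by
    intro t ht
    rw [← kelvin_add_smul_sub u hzy ht]
    refine hms _ _ (Real.sqrt_pos.mpr (by positivity)) y ?_
    rw [norm_sub_add_smul_sub hzy ht.le]
    exact (Real.sqrt_le_left (by positivity)).mpr (by nlinarith)
  refine le_of_tendsto ?_ ((eventually_gt_atTop 0).mono hbound)
  simpa using (tendsto_sqrt_div_add_pow_atTop ‖z - y‖ (n - 2)).mul_const (u z)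

theorem stmt11_general {n : ℕ} (u : EuclideanSpace ℝ (Fin n) → ℝ)
    (hms : ∀ (x : EuclideanSpace ℝ (Fin n)) (l : ℝ), 0 < l →
      ∀ y : EuclideanSpace ℝ (Fin n), l ≤ ‖y - x‖ → kelvin u x l y ≤ u y) :
    ∀ z : EuclideanSpace ℝ (Fin n), u z = u 0 := fun z =>
  le_antisymm (le_of_forall_kelvin_le u hms z 0) (le_of_forall_kelvin_le u hms 0 z)

theorem stmt11 {n : ℕ} (hn : 3 ≤ n) (u : EuclideanSpace ℝ (Fin n) → ℝ)
    (hu : Continuous u) (hupos : ∀ x, 0 < u x)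
    (hms : ∀ (x : EuclideanSpace ℝ (Fin n)) (l : ℝ), 0 < l →
      ∀ y : EuclideanSpace ℝ (Fin n), l ≤ ‖y - x‖ → kelvin u x l y ≤ u y) :
    ∀ z : EuclideanSpace ℝ (Fin n), u z = u 0 :=
  stmt11_general u hms
end

section
/- Let $n \ge 3$ and let $u$ be a continuous positive function on $\mathbb{R}^n \setminus \{0\}$ such that $u_{x,\lambda}(y) \le u(y)$ for all $x \in \mathbb{R}^n \setminus \{0\}$, all $0 < \lambda < |x|$, and all $y \ne 0$ with $|y - x| \ge \lambda$. Then $u$ is radially symmetric about the origin, i.e., $u(y)$ depends only on $|y|$. -/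
open Filter MeasureTheory

/-!
Inversion in a sphere of huge radius approximates reflection in a hyperplane. Given
`‖y‖ = ‖z‖` with `y ≠ z`, the spheres centred at `ε⁻¹ • (y - z)` of radius
`√(‖y - z‖ ^ 2 - ε ^ 2) / ε` avoid the origin and, as `ε → 0⁺`, converge to the perpendicular
bisector of `y` and `z`, which passes through `0`. Hence the Kelvin transforms of `u` at `z` tend
to `u y`, the hypothesis gives `u y ≤ u z`, and exchanging `y` and `z` gives equality.
-/

open scoped RealInnerProductSpace Topology

section InnerProduct

variable {E : Type*} [NormedAddCommGroup E] [InnerProductSpace ℝ E]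

lemma inner_sub_eq_neg_half_norm_sq_of_norm_eq {y z : E} (h : ‖y‖ = ‖z‖) :
    ⟪z, y - z⟫ = -(‖y - z‖ ^ 2 / 2) := by
  rw [norm_sub_sq_real, inner_sub_right, real_inner_self_eq_norm_sq, real_inner_comm, h]
  ring

lemma norm_sub_smul_sub_sq_of_norm_eq {y z : E} (h : ‖y‖ = ‖z‖) (t : ℝ) :
    ‖z - t • (y - z)‖ ^ 2 = ‖z‖ ^ 2 + t * ‖y - z‖ ^ 2 + t ^ 2 * ‖y - z‖ ^ 2 := by
  rw [norm_sub_sq_real, real_inner_smul_right, inner_sub_eq_neg_half_norm_sq_of_norm_eq h,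
    norm_smul, mul_pow, Real.norm_eq_abs, sq_abs]
  ring

end InnerProduct

lemma kelvin_eq_sqrt_mul {n : ℕ} (u : EuclideanSpace ℝ (Fin n) → ℝ)
    (x : EuclideanSpace ℝ (Fin n)) {l : ℝ} (hl : 0 ≤ l) (y : EuclideanSpace ℝ (Fin n)) :
    kelvin u x l y = √(l ^ 2 / ‖y - x‖ ^ 2) ^ (n - 2) *
      u (x + (l ^ 2 / ‖y - x‖ ^ 2) • (y - x)) := by
  rw [kelvin, ← div_pow, ← div_pow, Real.sqrt_sq (div_nonneg hl (norm_nonneg _))]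

lemma Filter.Tendsto.kelvin {α : Type*} {f : Filter α} {n : ℕ}
    {u : EuclideanSpace ℝ (Fin n) → ℝ} {x : α → EuclideanSpace ℝ (Fin n)} {l : α → ℝ}
    {y p : EuclideanSpace ℝ (Fin n)} (hl : ∀ᶠ a in f, 0 ≤ l a) (hu : ContinuousAt u p)
    (hratio : Tendsto (fun a => l a ^ 2 / ‖y - x a‖ ^ 2) f (𝓝 1))
    (himage : Tendsto (fun a => x a + (l a ^ 2 / ‖y - x a‖ ^ 2) • (y - x a)) f (𝓝 p)) :
    Tendsto (fun a => kelvin u (x a) (l a) y) f (𝓝 (u p)) := by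
  have hfactor := ((Real.continuous_sqrt.tendsto 1).comp hratio).pow (n - 2)
  rw [Real.sqrt_one, one_pow] at hfactor
  simpa only [one_mul] using (hfactor.mul (hu.tendsto.comp himage)).congr'
    (hl.mono fun a ha => (kelvin_eq_sqrt_mul u (x a) ha y).symm)

section LargeSphere

variable {n : ℕ} {y z : EuclideanSpace ℝ (Fin n)}

lemma kelvin_ratio_eq_of_norm_eq (h : ‖y‖ = ‖z‖) {ε : ℝ} (hε : 0 < ε) (hεd : ε ≤ ‖y - z‖) :
    (√(‖y - z‖ ^ 2 - ε ^ 2) / ε) ^ 2 / ‖z - ε⁻¹ • (y - z)‖ ^ 2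
      = (‖y - z‖ ^ 2 - ε ^ 2) / (‖z‖ ^ 2 * ε ^ 2 + ‖y - z‖ ^ 2 * ε + ‖y - z‖ ^ 2) := by
  have hsq : 0 ≤ ‖y - z‖ ^ 2 - ε ^ 2 := by nlinarith
  rw [div_pow, Real.sq_sqrt hsq, norm_sub_smul_sub_sq_of_norm_eq h]
  field_simp

lemma tendsto_kelvin_large_sphere {u : EuclideanSpace ℝ (Fin n) → ℝ} (hu : ContinuousAt u y)
    (hyz : y ≠ z) (h : ‖y‖ = ‖z‖) :
    Tendsto (fun ε => kelvin u (ε⁻¹ • (y - z)) (√(‖y - z‖ ^ 2 - ε ^ 2) / ε) z)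
      (𝓝[>] 0) (𝓝 (u y)) := by
  set d := ‖y - z‖
  set c := ‖z‖ ^ 2
  have hd : 0 < d := norm_pos_iff.2 (sub_ne_zero.2 hyz)
  set den : ℝ → ℝ := fun ε => c * ε ^ 2 + d ^ 2 * ε + d ^ 2
  have hden : den 0 ≠ 0 := by simp [den, hd.ne']
  have hsmall : ∀ᶠ ε in 𝓝[>] (0 : ℝ), 0 < ε ∧ ε ≤ d :=
    Ioc_mem_nhdsGT hd
  have hratio : Tendsto (fun ε : ℝ => (d ^ 2 - ε ^ 2) / den ε) (𝓝[>] 0) (𝓝 1) := by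
    have : ContinuousAt (fun ε : ℝ => (d ^ 2 - ε ^ 2) / den ε) 0 :=
      ContinuousAt.div (by fun_prop) (by fun_prop) hden
    simpa [den, hd.ne'] using this.tendsto.mono_left nhdsWithin_le_nhds
  have hshift : Tendsto (fun ε : ℝ => (d ^ 2 + (c + 1) * ε) / den ε) (𝓝[>] 0) (𝓝 1) := by
    have : ContinuousAt (fun ε : ℝ => (d ^ 2 + (c + 1) * ε) / den ε) 0 :=
      ContinuousAt.div (by fun_prop) (by fun_prop) hden
    simpa [den, hd.ne'] using this.tendsto.mono_left nhdsWithin_le_nhds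
  refine Tendsto.kelvin (hsmall.mono fun ε hε => div_nonneg (Real.sqrt_nonneg _) hε.1.le) hu
    (hratio.congr' ?_) ?_
  · filter_upwards [hsmall] with ε hε
    exact (kelvin_ratio_eq_of_norm_eq h hε.1 hε.2).symm
  · have himage := (hratio.smul_const z).add (hshift.smul_const (y - z))
    rw [one_smul, one_smul, add_sub_cancel] at himage
    refine himage.congr' ?_
    filter_upwards [hsmall] with ε hε
    rw [kelvin_ratio_eq_of_norm_eq h hε.1 hε.2]
    have hε0 : ε ≠ 0 := hε.1.ne'
    have hden_pos : 0 < den ε := by have := hε.1; positivity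
    have hshift_eq : (d ^ 2 + (c + 1) * ε) / den ε = ε⁻¹ * (1 - (d ^ 2 - ε ^ 2) / den ε) := by
      field_simp
      simp only [den]
      ring
    rw [hshift_eq]
    module

end LargeSphere

lemma le_of_kelvin_le_of_norm_eq {n : ℕ} {u : EuclideanSpace ℝ (Fin n) → ℝ}
    (hms : ∀ x : EuclideanSpace ℝ (Fin n), x ≠ 0 → ∀ l : ℝ, 0 < l → l < ‖x‖ →
      ∀ y : EuclideanSpace ℝ (Fin n), y ≠ 0 → l ≤ ‖y - x‖ → kelvin u x l y ≤ u y)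
    {y z : EuclideanSpace ℝ (Fin n)} (hu : ContinuousAt u y) (hz : z ≠ 0) (hyz : y ≠ z)
    (h : ‖y‖ = ‖z‖) : u y ≤ u z := by
  have hd : 0 < ‖y - z‖ := norm_pos_iff.2 (sub_ne_zero.2 hyz)
  refine le_of_tendsto (tendsto_kelvin_large_sphere hu hyz h) ?_
  filter_upwards [Ioo_mem_nhdsGT hd] with ε ⟨hε, hεd⟩
  have hsqrt_lt : √(‖y - z‖ ^ 2 - ε ^ 2) < ‖y - z‖ := by
    rw [Real.sqrt_lt' hd]
    nlinarith
  have hcenter : ‖ε⁻¹ • (y - z)‖ = ‖y - z‖ / ε := by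
    rw [norm_smul, Real.norm_of_nonneg (inv_nonneg.2 hε.le), inv_mul_eq_div]
  refine hms _ (smul_ne_zero (inv_ne_zero hε.ne') (sub_ne_zero.2 hyz)) _
    (div_pos (Real.sqrt_pos.2 (by nlinarith)) hε) ?_ z hz ?_
  · rw [hcenter]
    exact div_lt_div_of_pos_right hsqrt_lt hε
  · refine (div_le_div_of_nonneg_right hsqrt_lt.le hε.le).trans ?_
    rw [← hcenter]
    refine le_of_sq_le_sq ?_ (norm_nonneg _)
    rw [norm_sub_smul_sub_sq_of_norm_eq h, norm_smul, mul_pow, Real.norm_eq_abs, sq_abs]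
    have : 0 ≤ ε⁻¹ * ‖y - z‖ ^ 2 := by positivity
    nlinarith [sq_nonneg ‖z‖]

theorem stmt12_general {n : ℕ} (u : EuclideanSpace ℝ (Fin n) → ℝ)
    (hu : ContinuousOn u {(0 : EuclideanSpace ℝ (Fin n))}ᶜ)
    (hms : ∀ x : EuclideanSpace ℝ (Fin n), x ≠ 0 → ∀ l : ℝ, 0 < l → l < ‖x‖ →
      ∀ y : EuclideanSpace ℝ (Fin n), y ≠ 0 → l ≤ ‖y - x‖ → kelvin u x l y ≤ u y) :
    ∀ y z : EuclideanSpace ℝ (Fin n), y ≠ 0 → z ≠ 0 → ‖y‖ = ‖z‖ → u y = u z := by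
  intro y z hy hz h
  obtain rfl | hyz := eq_or_ne y z
  · rfl
  have hcont {w : EuclideanSpace ℝ (Fin n)} (hw : w ≠ 0) : ContinuousAt u w :=
    hu.continuousAt (isOpen_compl_singleton.mem_nhds hw)
  exact le_antisymm (le_of_kelvin_le_of_norm_eq hms (hcont hy) hz hyz h)
    (le_of_kelvin_le_of_norm_eq hms (hcont hz) hy hyz.symm h.symm)

theorem stmt12 {n : ℕ} (hn : 3 ≤ n) (u : EuclideanSpace ℝ (Fin n) → ℝ)
    (hu : ContinuousOn u {(0 : EuclideanSpace ℝ (Fin n))}ᶜ)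
    (hupos : ∀ x : EuclideanSpace ℝ (Fin n), x ≠ 0 → 0 < u x)
    (hms : ∀ x : EuclideanSpace ℝ (Fin n), x ≠ 0 → ∀ l : ℝ, 0 < l → l < ‖x‖ →
      ∀ y : EuclideanSpace ℝ (Fin n), y ≠ 0 → l ≤ ‖y - x‖ → kelvin u x l y ≤ u y) :
    ∀ y z : EuclideanSpace ℝ (Fin n), y ≠ 0 → z ≠ 0 → ‖y‖ = ‖z‖ → u y = u z :=
  stmt12_general u hu hms
end

section
/- Let $n \ge 3$, and let $u \in C^1(\mathbb{R}^n \setminus \{0\})$ be a positive function with $\liminf_{|y|\to 0} u(y) > 0$ and $\liminf_{|y|\to\infty} |y|^{n-2}u(y) > 0$. Then for every $x \in \mathbb{R}^n \setminus \{0\}$ the quantity $\bar\lambda(x) := \sup\{0 < \mu < |x| : u_{x,\lambda}(y) \le u(y) \text{ for all } 0 < \lambda < \mu,\, |y-x| \ge \lambda,\, y \ne 0\}$ is well defined and strictly positive; that is, there exists $\mu_0 \in (0, |x|)$ such that $u_{x,\lambda}(y) \le u(y)$ for all $0 < \lambda < \mu_0$ and all $y \ne 0$ with $|y - x| \ge \lambda$.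 -/
set_option maxHeartbeats 1000000


open Filter MeasureTheory

theorem stmt17 {n : ℕ} (hn : 3 ≤ n) (u : EuclideanSpace ℝ (Fin n) → ℝ)
    (hu : ContDiffOn ℝ 1 u {(0 : EuclideanSpace ℝ (Fin n))}ᶜ)
    (hupos : ∀ y : EuclideanSpace ℝ (Fin n), y ≠ 0 → 0 < u y)
    (h0 : 0 < Filter.liminf u (nhdsWithin (0 : EuclideanSpace ℝ (Fin n))
        {(0 : EuclideanSpace ℝ (Fin n))}ᶜ))
    (hinf : 0 < Filter.liminf (fun y => ‖y‖ ^ (n - 2) * u y)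
        (Filter.cocompact (EuclideanSpace ℝ (Fin n))))
    (x : EuclideanSpace ℝ (Fin n)) (hx : x ≠ 0) :
    ∃ μ₀ : ℝ, 0 < μ₀ ∧ μ₀ < ‖x‖ ∧
      ∀ l : ℝ, 0 < l → l < μ₀ →
        ∀ y : EuclideanSpace ℝ (Fin n), y ≠ 0 → l ≤ ‖y - x‖ → kelvin u x l y ≤ u y := by
  have hn2 : 2 ≤ n := by omega
  have hk1 : n - 2 ≠ 0 := by omega
  have hncast : ((n - 2 : ℕ) : ℝ) = (n : ℝ) - 2 := by
    push_cast [Nat.cast_sub hn2]; ring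
  set R := ‖x‖ with hRdef
  have hR0 : 0 < R := norm_pos_iff.mpr hx
  set B : Set (EuclideanSpace ℝ (Fin n)) := Metric.closedBall x (R / 2) with hBdef
  have hBsub : B ⊆ {(0 : EuclideanSpace ℝ (Fin n))}ᶜ := by
    intro y hy
    simp only [Set.mem_compl_iff, Set.mem_singleton_iff]
    intro h
    rw [Metric.mem_closedBall, h, dist_zero_left] at hy
    linarith
  have hBc : IsCompact B := isCompact_closedBall x (R / 2)
  have hxB : x ∈ B := Metric.mem_closedBall_self (by positivity)
  have hBne : B.Nonempty := ⟨x, hxB⟩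
  have hOpen : IsOpen ({(0 : EuclideanSpace ℝ (Fin n))}ᶜ) := isOpen_compl_singleton
  have hucont : ContinuousOn u {(0 : EuclideanSpace ℝ (Fin n))}ᶜ := hu.continuousOn
  -- min of u on B
  obtain ⟨ymin, hyminB, hymin⟩ := hBc.exists_isMinOn hBne (hucont.mono hBsub)
  set c := u ymin with hcdef
  have hc0 : 0 < c := hupos ymin (hBsub hyminB)
  -- bound on fderiv on B
  have hfd : ContinuousOn (fderiv ℝ u) {(0 : EuclideanSpace ℝ (Fin n))}ᶜ :=
    hu.continuousOn_fderiv_of_isOpen hOpen le_rfl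
  obtain ⟨C, hC⟩ := hBc.exists_bound_of_continuousOn (hfd.mono hBsub)
  have hC0 : 0 ≤ C := le_trans (norm_nonneg _) (hC x hxB)
  -- bound on u on B
  obtain ⟨M, hM⟩ := hBc.exists_bound_of_continuousOn (hucont.mono hBsub)
  have hM0 : 0 ≤ M := le_trans (norm_nonneg _) (hM x hxB)
  set p : ℝ := ((n : ℝ) - 2) / 2 with hpdef
  have hn3 : (3 : ℝ) ≤ (n : ℝ) := by exact_mod_cast hn
  have hp0 : 0 < p := by rw [hpdef]; linarith
  set r0 : ℝ := min (R / 2) (p * c / (C + 1)) with hr0def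
  have hr00 : 0 < r0 := lt_min (by positivity) (by positivity)
  have hr0R : r0 ≤ R / 2 := min_le_left _ _
  -- rpow/pow conversion
  have hpowc : ∀ t : ℝ, 0 ≤ t → t ^ (2 * p) = t ^ (n - 2 : ℕ) := by
    intro t ht
    rw [show 2 * p = ((n - 2 : ℕ) : ℝ) by rw [hncast, hpdef]; ring, Real.rpow_natCast]
  ------------------------------------------------------------------
  -- KEY STEP 1 : inner region
  ------------------------------------------------------------------
  have key1 : ∀ l : ℝ, 0 < l → ∀ y : EuclideanSpace ℝ (Fin n),
      l ≤ ‖y - x‖ → ‖y - x‖ ≤ r0 → kelvin u x l y ≤ u y := by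
    intro l hl y hls hsr0
    set v := y - x with hvdef
    set s := ‖v‖ with hsdef
    have hs0 : 0 < s := lt_of_lt_of_le hl hls
    have hmem : ∀ r : ℝ, 0 < r → r ≤ r0 → x + (r / s) • v ∈ B := by
      intro r hr hrr0
      rw [Metric.mem_closedBall, dist_eq_norm, add_sub_cancel_left, norm_smul,
        Real.norm_eq_abs, abs_of_pos (by positivity), ← hsdef, div_mul_cancel₀ _ hs0.ne']
      exact hrr0.trans hr0R
    set g : ℝ → ℝ := fun r => r ^ p * u (x + (r / s) • v) with hgdef
    have hderiv : ∀ r ∈ Set.Ioc (0 : ℝ) r0, HasDerivAt g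
        (p * r ^ (p - 1) * u (x + (r / s) • v)
          + r ^ p * (fderiv ℝ u (x + (r / s) • v) ((1 / s) • v))) r := by
      intro r hr
      have hzB : x + (r / s) • v ∈ B := hmem r hr.1 hr.2
      have hz0 : x + (r / s) • v ≠ 0 := hBsub hzB
      have hline : HasDerivAt (fun r : ℝ => x + (r / s) • v) ((1 / s) • v) r := by
        have h1 : HasDerivAt (fun r : ℝ => r / s) (1 / s) r := (hasDerivAt_id r).div_const s
        exact (h1.smul_const v).const_add x
      have hud : DifferentiableAt ℝ u (x + (r / s) • v) :=
        (hu.contDiffAt (hOpen.mem_nhds hz0)).differentiableAt one_ne_zero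
      have h2 : HasDerivAt (fun r : ℝ => u (x + (r / s) • v))
          (fderiv ℝ u (x + (r / s) • v) ((1 / s) • v)) r :=
        hud.hasFDerivAt.comp_hasDerivAt r hline
      have h1 : HasDerivAt (fun r : ℝ => r ^ p) (p * r ^ (p - 1)) r :=
        Real.hasDerivAt_rpow_const (Or.inl hr.1.ne')
      exact h1.mul h2
    have hdnn : ∀ r ∈ Set.Ioc (0 : ℝ) r0, 0 ≤ deriv g r := by
      intro r hr
      rw [(hderiv r hr).deriv]
      have hzB : x + (r / s) • v ∈ B := hmem r hr.1 hr.2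
      have hcz : c ≤ u (x + (r / s) • v) := hymin hzB
      have hnorm1 : ‖(1 / s) • v‖ = 1 := by
        rw [norm_smul, Real.norm_eq_abs, abs_of_pos (by positivity), ← hsdef, one_div,
          inv_mul_cancel₀ hs0.ne']
      have hDb : |fderiv ℝ u (x + (r / s) • v) ((1 / s) • v)| ≤ C := by
        calc |fderiv ℝ u (x + (r / s) • v) ((1 / s) • v)|
            = ‖fderiv ℝ u (x + (r / s) • v) ((1 / s) • v)‖ := (Real.norm_eq_abs _).symm
          _ ≤ ‖fderiv ℝ u (x + (r / s) • v)‖ * ‖(1 / s) • v‖ :=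
              (fderiv ℝ u (x + (r / s) • v)).le_opNorm _
          _ = ‖fderiv ℝ u (x + (r / s) • v)‖ := by rw [hnorm1, mul_one]
          _ ≤ C := hC _ hzB
      have hrp : (0 : ℝ) < r ^ (p - 1) := Real.rpow_pos_of_pos hr.1 _
      have htp : r ^ p = r ^ (p - 1) * r := by
        nth_rewrite 3 [← Real.rpow_one r]
        rw [← Real.rpow_add hr.1]
        norm_num
      have htc : r * (C + 1) ≤ p * c := by
        have h1 : r ≤ p * c / (C + 1) := hr.2.trans (min_le_right _ _)
        have h2 : r * (C + 1) ≤ (p * c / (C + 1)) * (C + 1) := by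
          apply mul_le_mul_of_nonneg_right h1 (by positivity)
        rwa [div_mul_cancel₀ _ (by positivity : (C : ℝ) + 1 ≠ 0)] at h2
      have habs := (abs_le.mp hDb).1
      rw [htp]
      nlinarith [mul_pos hrp hr.1,
        mul_le_mul_of_nonneg_left hcz (le_of_lt (mul_pos hp0 hrp)),
        mul_le_mul_of_nonneg_left habs (le_of_lt (mul_pos hrp hr.1)),
        mul_le_mul_of_nonneg_left htc hrp.le]
    have hmono : ∀ a b : ℝ, 0 < a → a ≤ b → b ≤ r0 → g a ≤ g b := by
      intro a b ha hab hbr0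
      have hsub : Set.Icc a b ⊆ Set.Ioc (0 : ℝ) r0 := fun t ht =>
        ⟨lt_of_lt_of_le ha ht.1, ht.2.trans hbr0⟩
      have hcont : ContinuousOn g (Set.Icc a b) := fun t ht =>
        ((hderiv t (hsub ht)).continuousAt).continuousWithinAt
      have hint : interior (Set.Icc a b) ⊆ Set.Ioc (0 : ℝ) r0 := by
        rw [interior_Icc]; exact fun t ht => hsub ⟨ht.1.le, ht.2.le⟩
      have hdiff : DifferentiableOn ℝ g (interior (Set.Icc a b)) := fun t ht =>
        ((hderiv t (hint ht)).differentiableAt).differentiableWithinAt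
      exact monotoneOn_of_deriv_nonneg (convex_Icc a b) hcont hdiff
        (fun t ht => hdnn t (hint ht)) ⟨le_rfl, hab⟩ ⟨hab, le_rfl⟩ hab
    -- apply with a = l^2/s, b = s
    have ha0 : 0 < l ^ 2 / s := by positivity
    have hab : l ^ 2 / s ≤ s := by
      rw [div_le_iff₀ hs0, sq]
      exact mul_le_mul hls hls hl.le (hl.trans_le hls).le
    have hgle : (l ^ 2 / s) ^ p * u (x + ((l ^ 2 / s) / s) • v)
        ≤ s ^ p * u (x + (s / s) • v) := hmono (l ^ 2 / s) s ha0 hab hsr0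
    have hsy : ‖y - x‖ = s := by rw [hsdef, hvdef]
    have harg : x + ((l ^ 2 / s) / s) • v = x + (l ^ 2 / ‖y - x‖ ^ 2) • (y - x) := by
      rw [hsy, ← hvdef, div_div, sq s]
    have hyarg : x + (s / s) • v = y := by
      rw [div_self hs0.ne', one_smul, hvdef]
      abel
    rw [harg, hyarg] at hgle
    set z := x + (l ^ 2 / ‖y - x‖ ^ 2) • (y - x) with hzdef
    have hmul := mul_le_mul_of_nonneg_left hgle (le_of_lt (Real.rpow_pos_of_pos hs0 p))
    have e3 : s ^ p * (l ^ 2 / s) ^ p = l ^ (n - 2 : ℕ) := by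
      rw [← Real.mul_rpow hs0.le (by positivity), mul_div_cancel₀ _ hs0.ne',
        ← Real.rpow_natCast l 2, ← Real.rpow_mul hl.le, ← hpowc l hl.le]
      norm_num
    have e4 : s ^ p * s ^ p = s ^ (n - 2 : ℕ) := by
      rw [← Real.rpow_add hs0, show p + p = 2 * p by ring, hpowc s hs0.le]
    have hfin : l ^ (n - 2 : ℕ) * u z ≤ s ^ (n - 2 : ℕ) * u y := by
      calc l ^ (n - 2 : ℕ) * u z = s ^ p * ((l ^ 2 / s) ^ p * u z) := by
            rw [← mul_assoc, e3]
        _ ≤ s ^ p * (s ^ p * u y) := hmul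
        _ = s ^ (n - 2 : ℕ) * u y := by rw [← mul_assoc, e4]
    simp only [kelvin]
    rw [div_mul_eq_mul_div, div_le_iff₀ (pow_pos hs0 _)]
    rw [← hzdef]
    linarith [hfin]
  ------------------------------------------------------------------
  -- STEP 2 : bound from below away from x
  ------------------------------------------------------------------
  -- near 0
  have hbdd0 : IsBoundedUnder (· ≥ ·) (nhdsWithin (0 : EuclideanSpace ℝ (Fin n))
      {(0 : EuclideanSpace ℝ (Fin n))}ᶜ) u := by
    refine ⟨0, ?_⟩
    rw [Filter.eventually_map]
    filter_upwards [self_mem_nhdsWithin] with y hy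
    exact (hupos y hy).le
  obtain ⟨c0, hc00, hc0lt⟩ := exists_between h0
  have hev0 := Filter.eventually_lt_of_lt_liminf hc0lt hbdd0
  rw [eventually_nhdsWithin_iff, Metric.eventually_nhds_iff] at hev0
  obtain ⟨δ, hδ0, hδ⟩ := hev0
  -- near infinity
  have hbddinf : IsBoundedUnder (· ≥ ·) (Filter.cocompact (EuclideanSpace ℝ (Fin n)))
      (fun y => ‖y‖ ^ (n - 2) * u y) := by
    refine ⟨0, ?_⟩
    rw [Filter.eventually_map]
    apply Filter.Eventually.of_forall
    intro y
    by_cases hy : y = 0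
    · simp [hy, zero_pow hk1]
    · exact (mul_pos (pow_pos (norm_pos_iff.mpr hy) _) (hupos y hy)).le
  obtain ⟨c1, hc10, hc1lt⟩ := exists_between hinf
  have hevinf := Filter.eventually_lt_of_lt_liminf hc1lt hbddinf
  obtain ⟨K0, hK0c, hK0⟩ := Filter.hasBasis_cocompact.eventually_iff.mp hevinf
  obtain ⟨RR, hRR⟩ := hK0c.isBounded.subset_closedBall 0
  -- middle region
  set RR' : ℝ := max (max RR (2 * R)) δ + 1 with hRR'def
  have hRR'δ : δ ≤ RR' := le_add_of_le_of_nonneg (le_max_right _ _) one_pos.le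
  have hRR'R : 2 * R ≤ RR' :=
    le_add_of_le_of_nonneg ((le_max_right RR _).trans (le_max_left _ _)) one_pos.le
  have hRR'RR : RR < RR' :=
    lt_of_le_of_lt ((le_max_left RR (2*R)).trans (le_max_left _ _)) (lt_add_one _)
  set A : Set (EuclideanSpace ℝ (Fin n)) :=
    Metric.closedBall 0 RR' \ Metric.ball 0 (δ / 2) with hAdef
  have hAc : IsCompact A := (isCompact_closedBall 0 RR').diff Metric.isOpen_ball
  have hAsub : A ⊆ {(0 : EuclideanSpace ℝ (Fin n))}ᶜ := by
    intro y hy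
    simp only [Set.mem_compl_iff, Set.mem_singleton_iff]
    intro h
    exact hy.2 (by simp [h, hδ0])
  have hAne : A.Nonempty := by
    refine ⟨(δ / (2 * R)) • x, ?_, ?_⟩
    · rw [Metric.mem_closedBall, dist_zero_right, norm_smul, Real.norm_eq_abs,
        abs_of_pos (by positivity), ← hRdef]
      calc δ / (2 * R) * R = δ / 2 := by field_simp
        _ ≤ RR' := le_trans (by linarith) hRR'δ
    · rw [Metric.mem_ball, dist_zero_right, norm_smul, Real.norm_eq_abs,
        abs_of_pos (by positivity), ← hRdef]
      rw [show δ / (2 * R) * R = δ / 2 by field_simp]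
      exact lt_irrefl _
  obtain ⟨ym, hymA, hym⟩ := hAc.exists_isMinOn hAne (hucont.mono hAsub)
  set m1 := u ym with hm1def
  have hm10 : 0 < m1 := hupos ym (hAsub hymA)
  -- global lower bound on the exterior of the ball of radius r0 around x
  set m : ℝ := min (r0 ^ (n - 2 : ℕ) * min c0 m1) (c1 / 2 ^ (n - 2 : ℕ)) with hmdef
  have hm0 : 0 < m := lt_min (by positivity) (by positivity)
  have hlow : ∀ y : EuclideanSpace ℝ (Fin n), y ≠ 0 → r0 ≤ ‖y - x‖ →
      m ≤ ‖y - x‖ ^ (n - 2 : ℕ) * u y := by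
    intro y hy hsr0
    have hs0 : 0 < ‖y - x‖ := lt_of_lt_of_le hr00 hsr0
    have hsp : r0 ^ (n - 2 : ℕ) ≤ ‖y - x‖ ^ (n - 2 : ℕ) := pow_le_pow_left₀ hr00.le hsr0 _
    rcases lt_or_ge ‖y‖ (δ / 2) with hy1 | hy1
    · -- near 0
      have hyu : c0 < u y := by
        refine hδ ?_ (Set.mem_compl_singleton_iff.mpr hy)
        rw [dist_zero_right]; linarith
      calc m ≤ r0 ^ (n - 2 : ℕ) * min c0 m1 := min_le_left _ _
        _ ≤ r0 ^ (n - 2 : ℕ) * c0 := by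
            exact mul_le_mul_of_nonneg_left (min_le_left _ _) (by positivity)
        _ ≤ ‖y - x‖ ^ (n - 2 : ℕ) * u y := by
            apply mul_le_mul hsp hyu.le hc00.le (by positivity)
    rcases le_or_gt ‖y‖ RR' with hy2 | hy2
    · -- middle region
      have hyA : y ∈ A := by
        constructor
        · rw [Metric.mem_closedBall, dist_zero_right]; exact hy2
        · rw [Metric.mem_ball, dist_zero_right]; exact not_lt.mpr hy1
      have hyu : m1 ≤ u y := hym hyA
      calc m ≤ r0 ^ (n - 2 : ℕ) * min c0 m1 := min_le_left _ _
        _ ≤ r0 ^ (n - 2 : ℕ) * m1 := by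
            exact mul_le_mul_of_nonneg_left (min_le_right _ _) (by positivity)
        _ ≤ ‖y - x‖ ^ (n - 2 : ℕ) * u y := by
            apply mul_le_mul hsp hyu hm10.le (by positivity)
    · -- near infinity
      have hynK : y ∉ K0 := by
        intro hyK
        have := hRR hyK
        rw [Metric.mem_closedBall, dist_zero_right] at this
        linarith
      have hyu : c1 < ‖y‖ ^ (n - 2 : ℕ) * u y := hK0 hynK
      have hy0 : (0 : ℝ) < ‖y‖ := norm_pos_iff.mpr hy
      have hupos' : 0 < u y := hupos y hy
      have hs2 : ‖y‖ / 2 ≤ ‖y - x‖ := by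
        have h1 : ‖y‖ - ‖x‖ ≤ ‖y - x‖ := by
          have := norm_sub_norm_le y x
          linarith [le_abs_self (‖y‖ - ‖x‖)]
        have h2 : 2 * R ≤ ‖y‖ := le_of_lt (lt_of_le_of_lt hRR'R hy2)
        rw [← hRdef] at h1
        linarith
      have hsp2 : (‖y‖ / 2) ^ (n - 2 : ℕ) ≤ ‖y - x‖ ^ (n - 2 : ℕ) :=
        pow_le_pow_left₀ (by positivity) hs2 _
      calc m ≤ c1 / 2 ^ (n - 2 : ℕ) := min_le_right _ _
        _ ≤ (‖y‖ ^ (n - 2 : ℕ) * u y) / 2 ^ (n - 2 : ℕ) := by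
            apply div_le_div_of_nonneg_right ?_ (by positivity)
            exact hyu.le
        _ = (‖y‖ / 2) ^ (n - 2 : ℕ) * u y := by
            rw [div_pow]; ring
        _ ≤ ‖y - x‖ ^ (n - 2 : ℕ) * u y := by
            apply mul_le_mul_of_nonneg_right hsp2 hupos'.le
  ------------------------------------------------------------------
  -- choice of μ₀ and conclusion
  ------------------------------------------------------------------
  refine ⟨min r0 (min 1 (m / (M + 1))), lt_min hr00 (lt_min one_pos (by positivity)), ?_, ?_⟩
  · calc min r0 (min 1 (m / (M + 1))) ≤ r0 := min_le_left _ _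
      _ ≤ R / 2 := hr0R
      _ < R := by linarith
  intro l hl hlμ y hy hls
  rcases le_or_gt ‖y - x‖ r0 with hcase | hcase
  · exact key1 l hl y hls hcase
  · -- outer region
    have hs0 : 0 < ‖y - x‖ := lt_of_lt_of_le hr00 hcase.le
    have hlr0 : l ≤ r0 := le_of_lt (lt_of_lt_of_le hlμ (min_le_left _ _))
    set z := x + (l ^ 2 / ‖y - x‖ ^ 2) • (y - x) with hzdef
    have hzB : z ∈ B := by
      rw [hzdef, Metric.mem_closedBall, dist_eq_norm, add_sub_cancel_left, norm_smul,
        Real.norm_eq_abs, abs_of_pos (by positivity)]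
      have : l ^ 2 / ‖y - x‖ ^ 2 * ‖y - x‖ = l ^ 2 / ‖y - x‖ := by
        field_simp
      rw [this]
      have h1 : l ^ 2 / ‖y - x‖ ≤ l := by
        rw [div_le_iff₀ hs0, sq]
        exact mul_le_mul_of_nonneg_left hls hl.le
      linarith [hr0R]
    have huzM : u z ≤ M := le_trans (le_abs_self _) (hM z hzB)
    have hμ1 : min r0 (min 1 (m / (M + 1))) ≤ 1 := (min_le_right _ _).trans (min_le_left _ _)
    have hμm : min r0 (min 1 (m / (M + 1))) ≤ m / (M + 1) :=
      (min_le_right _ _).trans (min_le_right _ _)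
    have hμ0' : 0 < min r0 (min 1 (m / (M + 1))) := lt_min hr00 (lt_min one_pos (by positivity))
    have hlk : l ^ (n - 2 : ℕ) ≤ m / (M + 1) := by
      calc l ^ (n - 2 : ℕ) ≤ (min r0 (min 1 (m / (M + 1)))) ^ (n - 2 : ℕ) :=
            pow_le_pow_left₀ hl.le hlμ.le _
        _ ≤ min r0 (min 1 (m / (M + 1))) := pow_le_of_le_one hμ0'.le hμ1 hk1
        _ ≤ m / (M + 1) := hμm
    have hlm : l ^ (n - 2 : ℕ) * M ≤ m := by
      have h1 : l ^ (n - 2 : ℕ) * (M + 1) ≤ (m / (M + 1)) * (M + 1) :=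
        mul_le_mul_of_nonneg_right hlk (by positivity)
      rw [div_mul_cancel₀ _ (by positivity : M + 1 ≠ 0)] at h1
      nlinarith [pow_nonneg hl.le (n - 2)]
    have hfin : l ^ (n - 2 : ℕ) * u z ≤ ‖y - x‖ ^ (n - 2 : ℕ) * u y := by
      calc l ^ (n - 2 : ℕ) * u z ≤ l ^ (n - 2 : ℕ) * M :=
            mul_le_mul_of_nonneg_left huzM (pow_nonneg hl.le _)
        _ ≤ m := hlm
        _ ≤ ‖y - x‖ ^ (n - 2 : ℕ) * u y := hlow y hy hcase.le
    simp only [kelvin]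
    rw [div_mul_eq_mul_div, div_le_iff₀ (pow_pos hs0 _), ← hzdef]
    linarith [hfin]
end
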